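/- (Special case of radial Sobolev) For any radial function w ∈ H¹(ℝ^d), d ≥ 3, one has ‖ |x|^{(d−2)/2} w ‖_{L^∞(ℝ^d)} ≤ C ‖∇w‖_{L²(ℝ^d)}. -/

import Mathlib

open MeasureTheory Real Set Metric
open scoped ENNReal

lemma opnorm_comp_isometry {E F : Type*} [NormedAddCommGroup E] [NormedSpace ℝ E]
    [NormedAddCommGroup F] [NormedSpace ℝ F]
    (A : E →L[ℝ] F) (B : E →L[ℝ] E) (B' : E →L[ℝ] E)
    (hB : ∀ v, ‖B v‖ = ‖v‖) (hB' : ∀ v, ‖B' v‖ = ‖v‖) (hBB' : ∀ v, B (B' v) = v) :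
    ‖A.comp B‖ = ‖A‖ := by
  refine le_antisymm (ContinuousLinearMap.opNorm_le_bound _ (norm_nonneg A) fun v => ?_)
    (ContinuousLinearMap.opNorm_le_bound _ (norm_nonneg _) fun u => ?_)
  · calc ‖A (B v)‖ ≤ ‖A‖ * ‖B v‖ := A.le_opNorm _
    _ = ‖A‖ * ‖v‖ := by rw [hB]
  · calc ‖A u‖ = ‖(A.comp B) (B' u)‖ := by rw [ContinuousLinearMap.comp_apply, hBB']
    _ ≤ ‖A.comp B‖ * ‖B' u‖ := (A.comp B).le_opNorm _
    _ = ‖A.comp B‖ * ‖u‖ := by rw [hB']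

lemma fderiv_norm_radial {d : ℕ} (w : EuclideanSpace ℝ (Fin d) → ℂ)
    (hrad : ∀ x y : EuclideanSpace ℝ (Fin d), ‖x‖ = ‖y‖ → w x = w y)
    (hdiff : Differentiable ℝ w) (x y : EuclideanSpace ℝ (Fin d)) (h : ‖x‖ = ‖y‖) :
    ‖fderiv ℝ w x‖ = ‖fderiv ℝ w y‖ := by
  set L : EuclideanSpace ℝ (Fin d) ≃ₗᵢ[ℝ] EuclideanSpace ℝ (Fin d) :=
    Submodule.reflection (ℝ ∙ (x - y))ᗮ with hL
  have hLx : L x = y := Submodule.reflection_sub h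
  have hcomp : w ∘ L = w := by
    funext z
    exact hrad (L z) z (L.norm_map z)
  have h1 : fderiv ℝ (w ∘ L) x = (fderiv ℝ w (L x)).comp (fderiv ℝ L x) :=
    fderiv_comp x (hdiff _) L.differentiableAt
  rw [hcomp, hLx, L.fderiv] at h1
  rw [h1]
  exact opnorm_comp_isometry _ _ L.symm.toLinearIsometry.toContinuousLinearMap
    (fun v => L.norm_map v) (fun v => L.symm.norm_map v) (fun v => L.apply_symm_apply v)

lemma lintegral_fun_norm_addHaar' {E : Type*} [NormedAddCommGroup E] [NormedSpace ℝ E]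
    [MeasurableSpace E] [BorelSpace E] [Nontrivial E] [FiniteDimensional ℝ E]
    (μ : Measure E) [μ.IsAddHaarMeasure] (f : ℝ → ℝ≥0∞) (hf : Measurable f) :
    ∫⁻ x, f ‖x‖ ∂μ = μ.toSphere Set.univ *
      ∫⁻ y in Ioi (0:ℝ), ENNReal.ofReal (y ^ (Module.finrank ℝ E - 1)) * f y := by
  have h0 : ∫⁻ x, f ‖x‖ ∂μ = ∫⁻ x in ({(0:E)}ᶜ : Set E), f ‖x‖ ∂μ := by
    rw [restrict_compl_singleton]
  rw [h0, ← lintegral_subtype_comap (measurableSet_singleton (0:E)).compl (fun x => f ‖x‖)]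
  have hFm : Measurable fun p : sphere (0:E) 1 × Ioi (0:ℝ) => f p.2.1 :=
    hf.comp (measurable_subtype_coe.comp measurable_snd)
  have h1 : ∫⁻ x : ({(0:E)}ᶜ : Set E), f ‖x.1‖ ∂(μ.comap (↑))
      = ∫⁻ p : sphere (0:E) 1 × Ioi (0:ℝ), f p.2.1
          ∂(μ.toSphere.prod (.volumeIoiPow (Module.finrank ℝ E - 1))) := by
    rw [← (μ.measurePreserving_homeomorphUnitSphereProd).lintegral_comp hFm]
    exact lintegral_congr fun a => by rw [homeomorphUnitSphereProd_apply_snd_coe]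
  rw [h1, lintegral_prod _ hFm.aemeasurable]
  have h2 : ∫⁻ y : Ioi (0:ℝ), f y.1 ∂(Measure.volumeIoiPow (Module.finrank ℝ E - 1))
      = ∫⁻ y in Ioi (0:ℝ), ENNReal.ofReal (y ^ (Module.finrank ℝ E - 1)) * f y := by
    rw [Measure.volumeIoiPow, lintegral_withDensity_eq_lintegral_mul _
      (by fun_prop) (show Measurable fun y : Ioi (0:ℝ) => f y.1 from hf.comp measurable_subtype_coe)]
    simp only [Pi.mul_apply]
    exact lintegral_subtype_comap measurableSet_Ioi
      (fun a => ENNReal.ofReal (a ^ (Module.finrank ℝ E - 1)) * f a)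
  simp only [h2, lintegral_const]
  rw [mul_comm]

lemma tail_holder (d : ℕ) (hd : 3 ≤ d) {g : ℝ → ℝ} (hg : Measurable g) {r : ℝ} (hr : 0 < r) :
    ∫⁻ t in Ioi r, ENNReal.ofReal (g t) ≤
      (∫⁻ t in Ioi (0:ℝ), ENNReal.ofReal t ^ ((d:ℝ)-1) * ENNReal.ofReal (g t) ^ (2:ℝ)) ^ ((1:ℝ)/2)
        * ENNReal.ofReal (r ^ ((2:ℝ)-(d:ℝ)) / ((d:ℝ)-2)) ^ ((1:ℝ)/2) := by
  set a : ℝ := ((d:ℝ)-1)/2 with ha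
  set u : ℝ → ℝ≥0∞ := fun t => ENNReal.ofReal t ^ a * ENNReal.ofReal (g t) with hu
  set v : ℝ → ℝ≥0∞ := fun t => ENNReal.ofReal t ^ (-a) with hv
  have hum : Measurable u := by fun_prop
  have hvm : Measurable v := by fun_prop
  have hpq : Real.HolderConjugate 2 2 := .two_two
  have step1 : ∫⁻ t in Ioi r, ENNReal.ofReal (g t) = ∫⁻ t in Ioi r, (u * v) t := by
    refine setLIntegral_congr_fun measurableSet_Ioi (fun t ht => ?_)
    have ht0 : 0 < t := lt_trans hr ht
    have h0 : ENNReal.ofReal t ≠ 0 := by simp [ht0]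
    have hT : ENNReal.ofReal t ≠ ⊤ := ENNReal.ofReal_ne_top
    simp only [Pi.mul_apply, hu, hv]
    rw [mul_comm (ENNReal.ofReal t ^ a) (ENNReal.ofReal (g t)), mul_assoc,
      ← ENNReal.rpow_add _ _ h0 hT]
    simp
  have step2 := ENNReal.lintegral_mul_le_Lp_mul_Lq (volume.restrict (Ioi r)) hpq
    hum.aemeasurable hvm.aemeasurable
  have step3 : (∫⁻ t in Ioi r, u t ^ (2:ℝ)) ≤
      ∫⁻ t in Ioi (0:ℝ), ENNReal.ofReal t ^ ((d:ℝ)-1) * ENNReal.ofReal (g t) ^ (2:ℝ) := by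
    have hcongr : ∫⁻ t in Ioi r, u t ^ (2:ℝ)
        = ∫⁻ t in Ioi r, ENNReal.ofReal t ^ ((d:ℝ)-1) * ENNReal.ofReal (g t) ^ (2:ℝ) := by
      refine setLIntegral_congr_fun measurableSet_Ioi (fun t ht => ?_)
      simp only [hu]
      rw [ENNReal.mul_rpow_of_nonneg _ _ (by norm_num : (0:ℝ) ≤ 2), ← ENNReal.rpow_mul]
      congr 1
      rw [ha]; ring_nf
    rw [hcongr]
    exact lintegral_mono_set (Ioi_subset_Ioi hr.le)
  have step4 : (∫⁻ t in Ioi r, v t ^ (2:ℝ)) = ENNReal.ofReal (r ^ ((2:ℝ)-(d:ℝ)) / ((d:ℝ)-2)) := by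
    have hcongr : ∫⁻ t in Ioi r, v t ^ (2:ℝ)
        = ∫⁻ t in Ioi r, ENNReal.ofReal (t ^ ((1:ℝ)-(d:ℝ))) := by
      refine setLIntegral_congr_fun measurableSet_Ioi (fun t ht => ?_)
      have ht0 : 0 < t := lt_trans hr ht
      simp only [hv]
      rw [← ENNReal.rpow_mul, ENNReal.ofReal_rpow_of_pos ht0]
      congr 1
      rw [ha]; ring
    have hint : IntegrableOn (fun t : ℝ => t ^ ((1:ℝ)-(d:ℝ))) (Ioi r) := by
      refine integrableOn_Ioi_rpow_of_lt ?_ hr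
      have : (3:ℝ) ≤ (d:ℝ) := by exact_mod_cast hd
      linarith
    rw [hcongr, ← ofReal_integral_eq_lintegral_ofReal hint
      (((ae_restrict_mem measurableSet_Ioi)).mono fun t ht =>
        Real.rpow_nonneg (le_of_lt (lt_trans hr ht)) _)]
    congr 1
    rw [integral_Ioi_rpow_of_lt (by
      have : (3:ℝ) ≤ (d:ℝ) := by exact_mod_cast hd
      linarith) hr]
    have h1 : (1:ℝ) - (d:ℝ) + 1 = 2 - (d:ℝ) := by ring
    rw [h1]
    rw [show (d:ℝ)-2 = -((2:ℝ)-(d:ℝ)) by ring, div_neg, neg_div]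
  calc ∫⁻ t in Ioi r, ENNReal.ofReal (g t) = ∫⁻ t in Ioi r, (u * v) t := step1
    _ ≤ (∫⁻ t in Ioi r, u t ^ (2:ℝ)) ^ ((1:ℝ)/2) * (∫⁻ t in Ioi r, v t ^ (2:ℝ)) ^ ((1:ℝ)/2) := step2
    _ ≤ _ := by
        rw [step4]
        exact mul_le_mul_left (ENNReal.rpow_le_rpow step3 (by norm_num)) _

/-- radial Strauss-type estimate: for radial `w ∈ H¹(ℝ^d)`, `d ≥ 3`,
`‖|x|^{(d-2)/2} w‖_{L^∞} ≤ C ‖∇w‖_{L²}`. -/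
theorem radial_strauss_estimate
    (d : ℕ) (hd : 3 ≤ d) :
    ∃ C > (0:ℝ), ∀ w : EuclideanSpace ℝ (Fin d) → ℂ,
      (∀ x y : EuclideanSpace ℝ (Fin d), ‖x‖ = ‖y‖ → w x = w y) →
      MemLp w 2 volume →
      Differentiable ℝ w →
      MemLp (fun x => fderiv ℝ w x) 2 volume →
      ∀ x : EuclideanSpace ℝ (Fin d),
        ‖x‖ ^ (((d:ℝ) - 2)/2) * ‖w x‖
          ≤ C * (eLpNorm (fun x => fderiv ℝ w x) 2 volume).toReal := by
  have hd3 : (3:ℝ) ≤ (d:ℝ) := by exact_mod_cast hd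
  set E := EuclideanSpace ℝ (Fin d) with hE
  have hd0 : 0 < d := by omega
  set i0 : Fin d := ⟨0, hd0⟩ with hi0
  set e : E := EuclideanSpace.single i0 (1:ℝ) with he_def
  have he : ‖e‖ = 1 := by rw [he_def, EuclideanSpace.norm_single]; norm_num
  haveI : Nontrivial E := ⟨e, 0, fun h => by simpa [he] using congrArg norm h⟩
  have hfr : Module.finrank ℝ E = d := finrank_euclideanSpace_fin
  set κ : ℝ≥0∞ := (volume : Measure E).toSphere Set.univ with hκ_def
  have hκ0 : κ ≠ 0 := by
    rw [hκ_def, Measure.toSphere_apply_univ]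
    refine mul_ne_zero (by rw [hfr]; exact_mod_cast hd0.ne') ?_
    exact (measure_ball_pos volume (0:E) one_pos).ne'
  have hκtop : κ ≠ ⊤ := measure_ne_top _ _
  have hκR : 0 < κ.toReal := ENNReal.toReal_pos hκ0 hκtop
  have hd2 : (0:ℝ) < (d:ℝ) - 2 := by linarith
  refine ⟨Real.sqrt ((κ.toReal)⁻¹ / ((d:ℝ)-2)), Real.sqrt_pos.2 (by positivity), ?_⟩
  intro w hrad hw2 hdiff hwD
  -- radial profile of the gradient norm
  set g : ℝ → ℝ := fun t => ‖fderiv ℝ w (t • e)‖ with hg_def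
  have hse : Continuous fun t : ℝ => t • e := continuous_id.smul continuous_const
  have hgm : Measurable g := ((measurable_fderiv ℝ w).comp hse.measurable).norm
  have hsm : ∀ r : ℝ, 0 ≤ r → ‖r • e‖ = r := fun r hr => by
    rw [norm_smul, he, mul_one, Real.norm_eq_abs, abs_of_nonneg hr]
  have hgrad : ∀ x : E, ‖fderiv ℝ w x‖ = g ‖x‖ := fun x =>
    fderiv_norm_radial w hrad hdiff x (‖x‖ • e) (by rw [hsm ‖x‖ (norm_nonneg x)])
  set G : ℝ≥0∞ := ∫⁻ t in Ioi (0:ℝ), ENNReal.ofReal t ^ ((d:ℝ)-1)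
      * ENNReal.ofReal (g t) ^ (2:ℝ) with hG_def
  set N : ℝ≥0∞ := eLpNorm (fun x => fderiv ℝ w x) 2 volume with hN_def
  -- polar coordinates for the gradient
  have hpow_congr : ∀ (f : ℝ → ℝ≥0∞),
      (∫⁻ y in Ioi (0:ℝ), ENNReal.ofReal (y ^ (d - 1)) * f y)
        = ∫⁻ y in Ioi (0:ℝ), ENNReal.ofReal y ^ ((d:ℝ)-1) * f y := by
    intro f
    refine setLIntegral_congr_fun measurableSet_Ioi (fun y hy => ?_)
    have hy0 : (0:ℝ) ≤ y := (le_of_lt hy)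
    rw [ENNReal.ofReal_pow hy0, ← ENNReal.rpow_natCast (ENNReal.ofReal y) (d-1)]
    congr 2
    have : ((d - 1 : ℕ) : ℝ) = (d:ℝ) - 1 := by
      rw [Nat.cast_sub (by omega)]; norm_num
    rw [this]
  have hpolarG : (∫⁻ x, ENNReal.ofReal ‖fderiv ℝ w x‖ ^ (2:ℝ) ∂(volume : Measure E)) = κ * G := by
    have h1 : (∫⁻ x, ENNReal.ofReal ‖fderiv ℝ w x‖ ^ (2:ℝ) ∂(volume : Measure E))
        = ∫⁻ x, (fun t => ENNReal.ofReal (g t) ^ (2:ℝ)) ‖x‖ ∂(volume : Measure E) :=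
      lintegral_congr fun x => by rw [hgrad x]
    rw [h1, lintegral_fun_norm_addHaar' (volume : Measure E)
      (fun t => ENNReal.ofReal (g t) ^ (2:ℝ)) (by fun_prop), hfr, hpow_congr, hG_def, hκ_def]
  have hN : N = (κ * G) ^ ((1:ℝ)/2) := by
    rw [hN_def, eLpNorm_eq_lintegral_rpow_enorm_toReal two_ne_zero ENNReal.ofNat_ne_top, ← hpolarG]
    simp only [← ofReal_norm, ENNReal.toReal_ofNat]
    rfl
  have hκGtop : κ * G ≠ ⊤ := by
    have h2 := hwD.2
    rw [← hN_def, hN] at h2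
    exact ((ENNReal.rpow_lt_top_iff_of_pos (by norm_num)).1 h2).ne
  have hGtop : G ≠ ⊤ := by
    intro h
    apply hκGtop
    rw [h, ENNReal.mul_top hκ0]
  -- the tail bound quantity
  set B : ℝ → ℝ≥0∞ := fun r => G ^ ((1:ℝ)/2)
      * ENNReal.ofReal (r ^ ((2:ℝ)-(d:ℝ)) / ((d:ℝ)-2)) ^ ((1:ℝ)/2) with hB_def
  have hBtop : ∀ r : ℝ, B r ≠ ⊤ := fun r => by
    rw [hB_def]
    exact ENNReal.mul_ne_top (ENNReal.rpow_ne_top_of_nonneg (by norm_num) hGtop)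
      (ENNReal.rpow_ne_top_of_nonneg (by norm_num) ENNReal.ofReal_ne_top)
  -- tail estimate for the derivative along the ray
  have hφ'bound : ∀ t : ℝ, ‖(fderiv ℝ w (t • e)) e‖ ≤ g t := fun t => by
    simpa [he] using (fderiv ℝ w (t • e)).le_opNorm e
  have hφ'm : Measurable fun t : ℝ => (fderiv ℝ w (t • e)) e :=
    (measurable_fderiv_apply_const ℝ w e).comp hse.measurable
  have htail : ∀ r : ℝ, 0 < r →
      (∫⁻ t in Ioi r, (‖(fderiv ℝ w (t • e)) e‖₊ : ℝ≥0∞)) ≤ B r := fun r hr => by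
    calc (∫⁻ t in Ioi r, (‖(fderiv ℝ w (t • e)) e‖₊ : ℝ≥0∞))
        ≤ ∫⁻ t in Ioi r, ENNReal.ofReal (g t) := by
          refine lintegral_mono fun t => ?_
          rw [← enorm_eq_nnnorm, ← ofReal_norm]
          exact ENNReal.ofReal_le_ofReal (hφ'bound t)
      _ ≤ B r := tail_holder d hd hgm hr
  -- FTC estimate
  have hder : ∀ t : ℝ, HasDerivAt (fun s : ℝ => w (s • e)) ((fderiv ℝ w (t • e)) e) t := by
    intro t
    have h1 : HasDerivAt (fun s : ℝ => s • e) e t := by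
      simpa using (hasDerivAt_id t).smul_const e
    exact (hdiff (t • e)).hasFDerivAt.comp_hasDerivAt t h1
  have hFTC : ∀ r R : ℝ, 0 < r → r ≤ R →
      ‖w (r • e)‖ ≤ ‖w (R • e)‖ + (B r).toReal := by
    intro r R hr hrR
    have hInt : IntervalIntegrable (fun t => (fderiv ℝ w (t • e)) e) volume r R := by
      rw [intervalIntegrable_iff_integrableOn_Ioc_of_le hrR]
      refine ⟨hφ'm.aestronglyMeasurable.restrict, ?_⟩
      refine lt_of_le_of_lt ?_ (lt_of_le_of_lt (htail r hr) (lt_top_iff_ne_top.2 (hBtop r)))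
      exact lintegral_mono_set Ioc_subset_Ioi_self
    have hsub := intervalIntegral.integral_eq_sub_of_hasDerivAt
      (f := fun s : ℝ => w (s • e)) (fun t _ => hder t) hInt
    have hnormint : ‖∫ t in r..R, (fderiv ℝ w (t • e)) e‖ ≤ (B r).toReal := by
      rw [intervalIntegral.integral_of_le hrR]
      have h1 : (‖∫ t in Ioc r R, (fderiv ℝ w (t • e)) e‖₊ : ℝ≥0∞) ≤ B r := by
        refine le_trans (enorm_integral_le_lintegral_enorm _) ?_
        exact le_trans (lintegral_mono_set Ioc_subset_Ioi_self) (htail r hr)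
      calc ‖∫ t in Ioc r R, (fderiv ℝ w (t • e)) e‖
          = ((‖∫ t in Ioc r R, (fderiv ℝ w (t • e)) e‖₊ : ℝ≥0∞)).toReal := by
            simp
        _ ≤ (B r).toReal := ENNReal.toReal_mono (hBtop r) h1
    calc ‖w (r • e)‖ = ‖w (R • e) - (w (R • e) - w (r • e))‖ := by ring_nf
      _ ≤ ‖w (R • e)‖ + ‖w (R • e) - w (r • e)‖ := norm_sub_le _ _
      _ ≤ ‖w (R • e)‖ + (B r).toReal := by
          rw [← hsub]
          exact add_le_add_right hnormint _
  -- smallness of w along a sequence going to infinity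
  have hsmall : ∀ r : ℝ, ∀ ε : ℝ, 0 < ε → ∃ R, r ≤ R ∧ ‖w (R • e)‖ ≤ ε := by
    intro r ε hε
    by_contra hcon
    push_neg at hcon
    set r₁ : ℝ := max r 1 with hr₁
    have hWfin : (∫⁻ x, ENNReal.ofReal ‖w x‖ ^ (2:ℝ) ∂(volume : Measure E)) < ⊤ := by
      have h2 := hw2.2
      rw [eLpNorm_eq_lintegral_rpow_enorm_toReal two_ne_zero ENNReal.ofNat_ne_top] at h2
      simp only [← ofReal_norm, ENNReal.toReal_ofNat] at h2
      exact (ENNReal.rpow_lt_top_iff_of_pos (by norm_num)).1 h2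
    have hwm : Measurable w := hdiff.continuous.measurable
    have hpolarW : (∫⁻ x, ENNReal.ofReal ‖w x‖ ^ (2:ℝ) ∂(volume : Measure E))
        = κ * ∫⁻ t in Ioi (0:ℝ), ENNReal.ofReal (t ^ (d - 1))
            * ENNReal.ofReal ‖w (t • e)‖ ^ (2:ℝ) := by
      have h1 : (∫⁻ x, ENNReal.ofReal ‖w x‖ ^ (2:ℝ) ∂(volume : Measure E))
          = ∫⁻ x, (fun t => ENNReal.ofReal ‖w (t • e)‖ ^ (2:ℝ)) ‖x‖ ∂(volume : Measure E) := by
        refine lintegral_congr fun x => ?_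
        rw [hrad x (‖x‖ • e) (by rw [hsm ‖x‖ (norm_nonneg x)])]
      rw [h1, lintegral_fun_norm_addHaar' (volume : Measure E)
        (fun t => ENNReal.ofReal ‖w (t • e)‖ ^ (2:ℝ))
        (by exact ((hwm.comp hse.measurable).norm.ennreal_ofReal).pow_const _), hfr, hκ_def]
    have hlower : (∫⁻ t in Ioi (0:ℝ), ENNReal.ofReal (t ^ (d - 1))
        * ENNReal.ofReal ‖w (t • e)‖ ^ (2:ℝ)) = ⊤ := by
      refine eq_top_iff.2 ?_
      calc (⊤ : ℝ≥0∞) = ∫⁻ _ in Ioi r₁, (ENNReal.ofReal ε ^ (2:ℝ)) := by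
            rw [setLIntegral_const, Real.volume_Ioi, ENNReal.mul_top]
            · simp [ENNReal.rpow_eq_zero_iff, hε, hε.le]
        _ ≤ ∫⁻ t in Ioi r₁, ENNReal.ofReal (t ^ (d - 1))
              * ENNReal.ofReal ‖w (t • e)‖ ^ (2:ℝ) := by
            refine setLIntegral_mono (by fun_prop) fun t ht => ?_
            have ht1 : (1:ℝ) ≤ t := le_of_lt (lt_of_le_of_lt (le_max_right r 1) ht)
            have htr : r ≤ t := le_of_lt (lt_of_le_of_lt (le_max_left r 1) ht)
            have h1 : (1:ℝ≥0∞) ≤ ENNReal.ofReal (t ^ (d - 1)) := by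
              rw [show (1:ℝ≥0∞) = ENNReal.ofReal 1 by simp]
              exact ENNReal.ofReal_le_ofReal (one_le_pow₀ ht1)
            have h2 : ENNReal.ofReal ε ^ (2:ℝ) ≤ ENNReal.ofReal ‖w (t • e)‖ ^ (2:ℝ) := by
              exact ENNReal.rpow_le_rpow (ENNReal.ofReal_le_ofReal (hcon t htr).le) (by norm_num)
            calc ENNReal.ofReal ε ^ (2:ℝ)
                = 1 * ENNReal.ofReal ε ^ (2:ℝ) := (one_mul _).symm
              _ ≤ ENNReal.ofReal (t ^ (d - 1)) * ENNReal.ofReal ‖w (t • e)‖ ^ (2:ℝ) :=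
                  mul_le_mul' h1 h2
        _ ≤ ∫⁻ t in Ioi (0:ℝ), ENNReal.ofReal (t ^ (d - 1))
              * ENNReal.ofReal ‖w (t • e)‖ ^ (2:ℝ) := by
            refine lintegral_mono_set (Ioi_subset_Ioi ?_)
            exact le_max_of_le_right zero_le_one
    rw [hpolarW, hlower, ENNReal.mul_top hκ0] at hWfin
    exact (lt_irrefl _ hWfin).elim
  -- main radial bound
  have hmain : ∀ r : ℝ, 0 < r → ‖w (r • e)‖ ≤ (B r).toReal := by
    intro r hr
    by_contra hcon
    push_neg at hcon
    set ε := (‖w (r • e)‖ - (B r).toReal) / 2 with hε_def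
    have hε : 0 < ε := by simp only [hε_def]; linarith
    obtain ⟨R, hrR, hRsmall⟩ := hsmall r ε hε
    have := hFTC r R hr hrR
    simp only [hε_def] at hRsmall
    linarith
  -- conclusion
  intro x
  rcases eq_or_ne x 0 with hx | hx
  · rw [hx]
    have : ‖(0:E)‖ = 0 := norm_zero
    rw [this, Real.zero_rpow (by intro h; rw [div_eq_zero_iff] at h; rcases h with h | h <;> linarith)]
    rw [zero_mul]
    positivity
  · have hr : 0 < ‖x‖ := norm_pos_iff.2 hx
    have hwx : w x = w (‖x‖ • e) := hrad x (‖x‖ • e) (by rw [hsm ‖x‖ (norm_nonneg x)])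
    rw [hwx]
    refine le_trans (mul_le_mul_of_nonneg_left (hmain ‖x‖ hr) (by positivity)) (le_of_eq ?_)
    -- now pure computation
    set r := ‖x‖ with hr_def
    have hA : (0:ℝ) ≤ r ^ ((2:ℝ)-(d:ℝ)) / ((d:ℝ)-2) := by positivity
    have hBtoReal : (B r).toReal
        = Real.sqrt G.toReal * Real.sqrt (r ^ ((2:ℝ)-(d:ℝ)) / ((d:ℝ)-2)) := by
      rw [hB_def, ENNReal.toReal_mul, ← ENNReal.toReal_rpow, ← ENNReal.toReal_rpow,
        ENNReal.toReal_ofReal hA, Real.sqrt_eq_rpow, Real.sqrt_eq_rpow]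
    have hNtoReal : N.toReal = Real.sqrt (κ.toReal * G.toReal) := by
      rw [hN, ← ENNReal.toReal_rpow, ENNReal.toReal_mul, Real.sqrt_eq_rpow]
    rw [hBtoReal, hNtoReal]
    have hG0 : (0:ℝ) ≤ G.toReal := ENNReal.toReal_nonneg
    -- LHS = sqrt(G/(d-2)) ; RHS = sqrt(κ⁻¹/(d-2)) * sqrt(κ G) = sqrt(G/(d-2))
    have hL : r ^ (((d:ℝ) - 2)/2) * (Real.sqrt G.toReal
        * Real.sqrt (r ^ ((2:ℝ)-(d:ℝ)) / ((d:ℝ)-2)))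
        = Real.sqrt (G.toReal / ((d:ℝ)-2)) := by
      rw [Real.sqrt_div (by positivity) ((d:ℝ)-2),
        Real.sqrt_eq_rpow (r ^ ((2:ℝ)-(d:ℝ))), ← Real.rpow_mul hr.le,
        Real.sqrt_div hG0]
      calc r ^ (((d:ℝ) - 2)/2) * (Real.sqrt G.toReal
            * (r ^ (((2:ℝ)-(d:ℝ)) * (1/2)) / Real.sqrt ((d:ℝ)-2)))
          = (r ^ (((d:ℝ) - 2)/2) * r ^ (((2:ℝ)-(d:ℝ)) * (1/2)))
              * Real.sqrt G.toReal / Real.sqrt ((d:ℝ)-2) := by ring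
        _ = Real.sqrt G.toReal / Real.sqrt ((d:ℝ)-2) := by
            rw [← Real.rpow_add hr, show ((d:ℝ) - 2)/2 + ((2:ℝ)-(d:ℝ)) * (1/2) = 0 by ring,
              Real.rpow_zero, one_mul]
    have hR : Real.sqrt ((κ.toReal)⁻¹ / ((d:ℝ)-2)) * Real.sqrt (κ.toReal * G.toReal)
        = Real.sqrt (G.toReal / ((d:ℝ)-2)) := by
      rw [← Real.sqrt_mul (by positivity)]
      congr 1
      field_simp
    rw [hL, hR]
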